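/- Let λ ∈ ℂ ∪ {∞} and let W_B(λ) be the Lie algebra defined below. Then the second Lie algebra cohomology HH²(W_B(λ)) of W_B(λ) with trivial coefficients ℂ has dimension 3. -/

import Mathlib

set_option maxSynthPendingDepth 2

/-- The coefficient `n(n+1)λ`, where `λ = ∞` (encoded by `none`) gives `n²`. -/
def lamTerm (lam : Option ℂ) (n : ℤ) : ℂ :=
  match lam with
  | some l => (n : ℂ) * ((n : ℂ) + 1) * l
  | none => (n : ℂ) ^ 2

/-- The space of 2-cocycles of a complex Lie algebra with trivial coefficients:
alternating bilinear maps `Ω : L × L → ℂ` satisfying the cocycle identity. -/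
noncomputable def twoCocycles (L : Type) [LieRing L] [LieAlgebra ℂ L] :
    Submodule ℂ (L →ₗ[ℂ] L →ₗ[ℂ] ℂ) where
  carrier := {Ω | (∀ x : L, Ω x x = 0) ∧
    ∀ x y z : L, Ω ⁅x, y⁆ z + Ω ⁅y, z⁆ x + Ω ⁅z, x⁆ y = 0}
  add_mem' := by
    rintro a b ⟨ha1, ha2⟩ ⟨hb1, hb2⟩
    refine ⟨fun x => ?_, fun x y z => ?_⟩
    · simp [LinearMap.add_apply, ha1 x, hb1 x]
    · simp only [LinearMap.add_apply]
      linear_combination ha2 x y z + hb2 x y z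
  zero_mem' := by
    refine ⟨fun x => by simp, fun x y z => by simp⟩
  smul_mem' := by
    rintro c a ⟨ha1, ha2⟩
    refine ⟨fun x => ?_, fun x y z => ?_⟩
    · simp [LinearMap.smul_apply, ha1 x]
    · simp only [LinearMap.smul_apply, smul_eq_mul]
      linear_combination c * ha2 x y z

/-- The space of 2-coboundaries of a complex Lie algebra with trivial coefficients:
bilinear maps of the form `(x, y) ↦ ψ ⁅x, y⁆` for a linear functional `ψ`. -/
noncomputable def twoCoboundaries (L : Type) [LieRing L] [LieAlgebra ℂ L] :
    Submodule ℂ (L →ₗ[ℂ] L →ₗ[ℂ] ℂ) where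
  carrier := {Ω | ∃ ψ : L →ₗ[ℂ] ℂ, ∀ x y : L, Ω x y = ψ ⁅x, y⁆}
  add_mem' := by
    rintro a b ⟨ψ₁, h₁⟩ ⟨ψ₂, h₂⟩
    exact ⟨ψ₁ + ψ₂, fun x y => by simp [LinearMap.add_apply, h₁ x y, h₂ x y]⟩
  zero_mem' := ⟨0, fun x y => by simp⟩
  smul_mem' := by
    rintro c a ⟨ψ, h⟩
    exact ⟨c • ψ, fun x y => by simp [LinearMap.smul_apply, h x y]⟩

/-!
For a cocycle `Ω` and eigenvectors `x`, `y` of `ad L_0` with eigenvalues `s`, `t`, the cocycle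
identity on `(L_0, x, y)` gives `(s + t) Ω(x, y) = Ω(L_0, ⁅x, y⁆)`. So away from total degree `0`
every cocycle agrees with the coboundary of `x ↦ Ω(L_0, x) / deg x`, and a cocycle is a coboundary
as soon as its degree-zero part is. That part consists of the sequences `Ω(L_n, L_{-n})`,
`Ω(L_n, B_{-n})` and `Ω(B_n, B_{-n})`. The cocycle identity forces them into the spans of `n, n³`,
of `n, n²` and of `n` respectively, and each one is determined by its values at `n = 1, 2`.
Coboundaries contribute exactly the multiples of `n` to the first and of
`κ(n) = n + n(n+1)λ` (`n + n²` for `λ = ∞`) to the second. Hence the three functionals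
`Ω(L_2, L_{-2}) - 2 Ω(L_1, L_{-1})`, `κ(2) Ω(L_1, B_{-1}) - κ(1) Ω(L_2, B_{-2})` and `Ω(B_1, B_{-1})`
vanish exactly on coboundaries. Explicit cocycles show that together they are surjective onto `ℂ³`.
-/

section Cocycles

variable {L : Type} [LieRing L] [LieAlgebra ℂ L]

lemma isAlt_of_mem_twoCocycles {Ω : L →ₗ[ℂ] L →ₗ[ℂ] ℂ} (hΩ : Ω ∈ twoCocycles L) : Ω.IsAlt :=
  hΩ.1

lemma add_mul_apply_eq_apply_lie {Ω : L →ₗ[ℂ] L →ₗ[ℂ] ℂ} (hΩ : Ω ∈ twoCocycles L) {d x y : L}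
    {s t : ℂ} (hx : ⁅d, x⁆ = s • x) (hy : ⁅d, y⁆ = t • y) :
    (s + t) * Ω x y = Ω d ⁅x, y⁆ := by
  have h := hΩ.2 d x y
  rw [hx, ← lie_skew y d, hy] at h
  have hxy := (isAlt_of_mem_twoCocycles hΩ).neg x y
  have hd := (isAlt_of_mem_twoCocycles hΩ).neg d ⁅x, y⁆
  simp only [map_smul, map_neg, LinearMap.smul_apply, LinearMap.neg_apply, smul_eq_mul] at h
  linear_combination h - t * hxy + hd

variable {ι : Type*} (b : Module.Basis ι ℂ L)

open LieModule.Cohomology in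
lemma mem_twoCocycles_of_basis {Ω : L →ₗ[ℂ] L →ₗ[ℂ] ℂ}
    (hskew : ∀ i j, Ω (b i) (b j) = -Ω (b j) (b i))
    (hjac : ∀ i j k, Ω ⁅b i, b j⁆ (b k) + Ω ⁅b j, b k⁆ (b i) + Ω ⁅b k, b i⁆ (b j) = 0) :
    Ω ∈ twoCocycles L := by
  have halt : Ω.IsAlt := LinearMap.isAlt_iff_eq_neg_flip.2 <|
    LinearMap.ext_basis b b fun i j => by simpa using hskew i j
  have key (a : twoCochain ℂ L (TrivialLieModule ℂ L ℂ)) (x y z : L) :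
      d₂₃ ℂ L (TrivialLieModule ℂ L ℂ) a x y z = -(a ⁅x, y⁆ z + a ⁅y, z⁆ x + a ⁅z, x⁆ y) := by
    rw [d₂₃_apply, ← lie_skew z x, map_neg, LinearMap.neg_apply]
    simp only [trivial_lie_zero]
    abel
  have hd : d₂₃ ℂ L (TrivialLieModule ℂ L ℂ) ⟨Ω, halt⟩ = 0 :=
    LinearMap.ext_basis b b fun i j => b.ext fun k => by
      rw [key]
      exact neg_eq_zero.2 (hjac i j k)
  exact ⟨halt, fun x y z => neg_eq_zero.1 ((key _ x y z).symm.trans congr($hd x y z))⟩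

variable {c : ι → ι → ℂ} {μ : ι → ι → ι}

noncomputable def basisBilin (G : ι → ι → ℂ) : L →ₗ[ℂ] L →ₗ[ℂ] ℂ :=
  b.constr ℂ fun i => b.constr ℂ fun j => G i j

@[simp] lemma basisBilin_apply_basis (G : ι → ι → ℂ) (i j : ι) :
    basisBilin b G (b i) (b j) = G i j := by
  simp [basisBilin, Module.Basis.constr_basis]

variable {b} (hbr : ∀ i j, ⁅b i, b j⁆ = c i j • b (μ i j))
include hbr

lemma basisBilin_mem_twoCocycles {G : ι → ι → ℂ} (hskew : ∀ i j, G i j = -G j i)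
    (hjac : ∀ i j k, c i j * G (μ i j) k + c j k * G (μ j k) i + c k i * G (μ k i) j = 0) :
    basisBilin b G ∈ twoCocycles L :=
  mem_twoCocycles_of_basis b (by simpa using hskew) fun i j k => by simpa [hbr] using hjac i j k

lemma structConst_mul_apply_add_eq_zero {Ω : L →ₗ[ℂ] L →ₗ[ℂ] ℂ} (hΩ : Ω ∈ twoCocycles L)
    (i j k : ι) :
    c i j * Ω (b (μ i j)) (b k) + c j k * Ω (b (μ j k)) (b i) + c k i * Ω (b (μ k i)) (b j) =
      0 := by
  simpa [hbr] using hΩ.2 (b i) (b j) (b k)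

variable {deg : ι → ℤ} (hμ : ∀ i j, deg (μ i j) = deg i + deg j)
include hμ

lemma basisBilin_mem_twoCocycles_of_degree {G : ι → ι → ℂ}
    (hG : ∀ i j, deg i + deg j ≠ 0 → G i j = 0) (hskew : ∀ i j, G i j = -G j i)
    (hjac : ∀ i j k, deg i + deg j + deg k = 0 →
      c i j * G (μ i j) k + c j k * G (μ j k) i + c k i * G (μ k i) j = 0) :
    basisBilin b G ∈ twoCocycles L := by
  refine basisBilin_mem_twoCocycles hbr hskew fun i j k => ?_
  by_cases h : deg i + deg j + deg k = 0
  · exact hjac i j k h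
  · rw [hG _ _ (by rw [hμ]; exact h), hG _ _ (by rw [hμ]; contrapose! h; linarith),
      hG _ _ (by rw [hμ]; contrapose! h; linarith)]
    ring

lemma mem_twoCoboundaries_of_degree_zero {d : L} (hd : ∀ i, ⁅d, b i⁆ = (deg i : ℂ) • b i)
    {Ω : L →ₗ[ℂ] L →ₗ[ℂ] ℂ} (hΩ : Ω ∈ twoCocycles L) (ν : ι → ℂ)
    (h0 : ∀ i j, deg i + deg j = 0 → Ω (b i) (b j) = c i j * ν (μ i j)) :
    Ω ∈ twoCoboundaries L := by
  classical
  let ψ : L →ₗ[ℂ] ℂ := b.constr ℂ fun k => if deg k = 0 then ν k else Ω d (b k) / deg k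
  suffices Ω = (LieAlgebra.ad ℂ L : L →ₗ[ℂ] Module.End ℂ L).compr₂ ψ from
    ⟨ψ, fun x y => by rw [this]; rfl⟩
  refine LinearMap.ext_basis b b fun i j => ?_
  simp only [LinearMap.compr₂_apply, LieHom.coe_toLinearMap, LieAlgebra.ad_apply, hbr, map_smul,
    ψ, Module.Basis.constr_basis, hμ, smul_eq_mul]
  split_ifs with h
  · exact h0 i j h
  · have hdeg := add_mul_apply_eq_apply_lie hΩ (hd i) (hd j)
    rw [hbr, map_smul, smul_eq_mul] at hdeg
    have hne : (deg i + deg j : ℂ) ≠ 0 := by exact_mod_cast h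
    rw [Int.cast_add, mul_div_assoc', eq_div_iff hne]
    linear_combination hdeg

end Cocycles

lemma eq_zero_of_two_le_of_rec {f A : ℤ → ℂ} (h2 : f 2 = 0)
    (hstep : ∀ n : ℤ, 2 ≤ n → (1 - (n : ℂ)) * f (n + 1) + A n * f n = 0) :
    ∀ n : ℤ, 2 ≤ n → f n = 0 := by
  intro n hn
  induction n, hn using Int.leInduction with
  | base => exact h2
  | succ n hn ih =>
    have h := hstep n hn
    rw [ih, mul_zero, add_zero] at h
    refine (mul_eq_zero.1 h).resolve_left fun h1 => ?_
    have : (n : ℂ) = 1 := by linear_combination -h1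
    exact absurd (Int.cast_eq_one.1 this) (by omega)

lemma eq_zero_of_virasoro_rec {f : ℤ → ℂ} (hodd : ∀ n, f (-n) = -f n)
    (hrec : ∀ n m : ℤ, (m - n : ℂ) * f (n + m) + (n + 2 * m : ℂ) * f n - (2 * n + m : ℂ) * f m = 0)
    (h1 : f 1 = 0) (h2 : f 2 = 0) : f = 0 := by
  have hpos : ∀ n : ℤ, 2 ≤ n → f n = 0 :=
    eq_zero_of_two_le_of_rec (A := fun n => n + 2) h2 fun n _ => by
      linear_combination hrec n 1 + (2 * n + 1 : ℂ) * h1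
  have h0 : f 0 = 0 := by
    have h := hodd 0
    rw [neg_zero] at h
    linear_combination h / 2
  have hnonneg : ∀ n ≥ 0, f n = 0 := fun n hn => by
    obtain rfl | rfl | hn := (by omega : n = 0 ∨ n = 1 ∨ n ≥ 2)
    exacts [h0, h1, hpos n hn]
  funext n
  rcases le_or_gt 0 n with hn | hn
  · exact hnonneg n hn
  · simpa [hnonneg (-n) (by omega)] using hodd n

lemma eq_zero_of_mixed_rec {f : ℤ → ℂ}
    (hrec : ∀ n m : ℤ, n ≠ 0 → m ≠ 0 → (m - n : ℂ) * f (n + m) + (n + m : ℂ) * (f n - f m) = 0)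
    (h1 : f 1 = 0) (h2 : f 2 = 0) : f = 0 := by
  have hpos : ∀ n : ℤ, 2 ≤ n → f n = 0 :=
    eq_zero_of_two_le_of_rec (A := fun n => n + 1) h2 fun n hn => by
      linear_combination hrec n 1 (by omega) one_ne_zero + (n + 1 : ℂ) * h1
  have hm1 : f (-1) = 0 := by
    have h := hrec 2 (-1) (by omega) (by omega)
    norm_num at h
    linear_combination -h - 3 * h1 + h2
  have hm2 : f (-2) = 0 := by
    have h := hrec 1 (-3) (by omega) (by omega)
    have h' := hrec (-1) (-2) (by omega) (by omega)
    norm_num at h h'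
    linear_combination (1 / 2 : ℂ) * h + h' + h1 + 3 * hm1
  have hneg : ∀ n : ℤ, 2 ≤ n → f (-n) = 0 :=
    eq_zero_of_two_le_of_rec (f := fun n => f (-n)) (A := fun n => n + 1) hm2 fun n hn => by
      have h := hrec (-1) (-n) (by omega) (by omega)
      rw [show -1 + -n = -(n + 1) by ring, hm1] at h
      push_cast at h
      linear_combination h
  have h0 : f 0 = 0 := by
    have h := hrec 1 (-1) (by omega) (by omega)
    norm_num at h
    exact h
  funext n
  obtain hn | rfl | rfl | rfl | hn := (by omega : n ≤ -2 ∨ n = -1 ∨ n = 0 ∨ n = 1 ∨ 2 ≤ n)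
  · simpa using hneg (-n) (by omega)
  exacts [hm1, h0, h1, hpos n hn]

lemma exists_eq_mul_of_mul_eq_mul {K : Type*} [Field K] {u₁ u₂ v₁ v₂ : K}
    (hu : u₁ ≠ 0 ∨ u₂ ≠ 0) (h : u₂ * v₁ = u₁ * v₂) : ∃ c, v₁ = c * u₁ ∧ v₂ = c * u₂ := by
  rcases hu with hu | hu
  · refine ⟨v₁ / u₁, by field_simp, ?_⟩
    field_simp
    linear_combination -h
  · refine ⟨v₂ / u₂, ?_, by field_simp⟩
    field_simp
    linear_combination h

lemma lamTerm_zero (lam : Option ℂ) : lamTerm lam 0 = 0 := by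
  cases lam <;> simp [lamTerm]

namespace WB

def deg : ℤ ⊕ ℤ → ℤ
  | .inl n => n
  | .inr n => n

def structConst (lam : Option ℂ) : ℤ ⊕ ℤ → ℤ ⊕ ℤ → ℂ
  | .inl n, .inl m => m - n
  | .inl n, .inr m => m - if n + m = 0 then lamTerm lam n else 0
  | .inr n, .inl m => -(n - if m + n = 0 then lamTerm lam m else 0)
  | .inr _, .inr _ => 0

def bracketIndex : ℤ ⊕ ℤ → ℤ ⊕ ℤ → ℤ ⊕ ℤ
  | .inl n, .inl m => .inl (n + m)
  | .inl n, .inr m => .inr (n + m)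
  | .inr n, .inl m => .inr (m + n)
  | .inr n, .inr m => .inr (n + m)

lemma deg_bracketIndex (i j : ℤ ⊕ ℤ) : deg (bracketIndex i j) = deg i + deg j := by
  rcases i with n | n <;> rcases j with m | m <;> simp [deg, bracketIndex, add_comm]

def cocycleCoeff (a p q r : ℂ) : ℤ ⊕ ℤ → ℤ ⊕ ℤ → ℂ
  | .inl n, .inl m => if n + m = 0 then a * n ^ 3 else 0
  | .inl n, .inr m => if n + m = 0 then p * n + q * n ^ 2 else 0
  | .inr m, .inl n => if n + m = 0 then -(p * n + q * n ^ 2) else 0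
  | .inr n, .inr m => if n + m = 0 then r * n else 0

/-- `⁅L_n, B_{-n}⁆ = -kappa lam n • B_0`. -/
def kappa (lam : Option ℂ) (n : ℤ) : ℂ := n + lamTerm lam n

lemma kappa_one_ne_zero_or_kappa_two_ne_zero (lam : Option ℂ) :
    kappa lam 1 ≠ 0 ∨ kappa lam 2 ≠ 0 := by
  rw [or_iff_not_imp_left, not_not]
  intro h1 h2
  cases lam <;> simp only [kappa, lamTerm] at h1 h2 <;> push_cast at h1 h2
  · norm_num at h1
  · exact one_ne_zero (by linear_combination 3 * h1 - h2 : (1 : ℂ) = 0)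

lemma kappa_rec (lam : Option ℂ) (n m : ℤ) :
    (m - n : ℂ) * kappa lam (n + m) + (n + m : ℂ) * (kappa lam n - kappa lam m) = 0 := by
  cases lam <;> simp only [kappa, lamTerm] <;> push_cast <;> ring

noncomputable def invariants (lam : Option ℂ) {L : Type} [LieRing L] [LieAlgebra ℂ L]
    (b : Module.Basis (ℤ ⊕ ℤ) ℂ L) : (L →ₗ[ℂ] L →ₗ[ℂ] ℂ) →ₗ[ℂ] Fin 3 → ℂ where
  toFun Ω := ![Ω (b (.inl 2)) (b (.inl (-2))) - 2 * Ω (b (.inl 1)) (b (.inl (-1))),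
    kappa lam 2 * Ω (b (.inl 1)) (b (.inr (-1))) - kappa lam 1 * Ω (b (.inl 2)) (b (.inr (-2))),
    Ω (b (.inr 1)) (b (.inr (-1)))]
  map_add' Ω Ω' := by ext i; fin_cases i <;> simp <;> ring
  map_smul' c Ω := by ext i; fin_cases i <;> simp <;> ring

section

variable {lam : Option ℂ} {L : Type} [LieRing L] [LieAlgebra ℂ L]
  {b : Module.Basis (ℤ ⊕ ℤ) ℂ L}

lemma lie_basis
    (hLL : ∀ n m : ℤ,
      ⁅b (Sum.inl n), b (Sum.inl m)⁆ = ((m : ℂ) - (n : ℂ)) • b (Sum.inl (n + m)))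
    (hLB : ∀ n m : ℤ,
      ⁅b (Sum.inl n), b (Sum.inr m)⁆ =
        ((m : ℂ) - (if n + m = 0 then lamTerm lam n else 0)) • b (Sum.inr (n + m)))
    (hBB : ∀ n m : ℤ, ⁅b (Sum.inr n), b (Sum.inr m)⁆ = 0) (i j : ℤ ⊕ ℤ) :
    ⁅b i, b j⁆ = structConst lam i j • b (bracketIndex i j) := by
  rcases i with n | n <;> rcases j with m | m
  · exact hLL n m
  · exact hLB n m
  · rw [← lie_skew, hLB, structConst, bracketIndex, neg_smul]
  · rw [hBB, structConst, zero_smul]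

variable (hbr : ∀ i j, ⁅b i, b j⁆ = structConst lam i j • b (bracketIndex i j))
include hbr

lemma lie_inl_zero (i : ℤ ⊕ ℤ) : ⁅b (.inl 0), b i⁆ = (deg i : ℂ) • b i := by
  rcases i with m | m <;> simp [hbr, structConst, bracketIndex, deg, lamTerm_zero]

lemma basisBilin_cocycleCoeff_mem_twoCocycles (a p q r : ℂ) :
    basisBilin b (cocycleCoeff a p q r) ∈ twoCocycles L := by
  refine basisBilin_mem_twoCocycles_of_degree hbr deg_bracketIndex ?_ ?_ ?_
  · rintro (n | n) (m | m) h <;> simp_all [deg, cocycleCoeff, add_comm]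
  · rintro (n | n) (m | m) <;> by_cases h : n + m = 0 <;> simp [cocycleCoeff, h, add_comm m n] <;>
      obtain rfl := neg_eq_of_add_eq_zero_right h <;> push_cast <;> ring
  · rintro (n | n) (m | m) (k | k) h <;> simp only [deg] at h <;>
      obtain rfl : k = -n - m := by omega
    -- with `k = -n - m`, the conditions `n = 0`, `m = 0`, `n + m = 0` decide every `if`
    all_goals
      rcases eq_or_ne n 0 with hn | hn <;> rcases eq_or_ne m 0 with hm | hm <;>
      rcases eq_or_ne (n + m) 0 with hnm | hnm <;>
      simp (disch := omega) only [structConst, bracketIndex, cocycleCoeff, if_pos, if_neg] <;>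
      (try (have e : m = -n := by omega); subst e) <;>
      (try (have e : n = 0 := by omega); subst e) <;>
      (try (have e : m = 0 := by omega); subst e) <;> push_cast <;> ring

lemma invariants_eq_zero_of_mem_twoCoboundaries {Ω : L →ₗ[ℂ] L →ₗ[ℂ] ℂ}
    (hΩ : Ω ∈ twoCoboundaries L) : invariants lam b Ω = 0 := by
  obtain ⟨ψ, hψ⟩ := hΩ
  ext i
  fin_cases i <;> simp [invariants, hψ, hbr, structConst, bracketIndex, kappa] <;> ring

lemma invariants_comp_subtype_surjective :
    Function.Surjective (invariants lam b ∘ₗ (twoCocycles L).subtype) := by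
  intro v
  obtain ⟨p, q, hpq⟩ : ∃ p q : ℂ, kappa lam 2 * (p + q) - kappa lam 1 * (2 * p + 4 * q) = v 1 := by
    cases lam
    · exact ⟨0, -v 1 / 2, by simp only [kappa, lamTerm]; push_cast; ring⟩
    · exact ⟨-v 1 / 2, -v 1 / 2, by simp only [kappa, lamTerm]; push_cast; ring⟩
  refine ⟨⟨_, basisBilin_cocycleCoeff_mem_twoCocycles hbr (v 0 / 6) p q (v 2)⟩, ?_⟩
  ext i
  fin_cases i <;> simp [invariants, cocycleCoeff]
  · ring
  · linear_combination hpq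

variable {Ω : L →ₗ[ℂ] L →ₗ[ℂ] ℂ} (hΩ : Ω ∈ twoCocycles L)
include hΩ

lemma apply_inl_inl_neg_eq_mul
    (h2 : Ω (b (.inl 2)) (b (.inl (-2))) = 2 * Ω (b (.inl 1)) (b (.inl (-1)))) (n : ℤ) :
    Ω (b (.inl n)) (b (.inl (-n))) = n * Ω (b (.inl 1)) (b (.inl (-1))) := by
  have halt := isAlt_of_mem_twoCocycles hΩ
  let f n := Ω (b (.inl n)) (b (.inl (-n))) - n * Ω (b (.inl 1)) (b (.inl (-1)))
  suffices f = 0 from sub_eq_zero.1 congr($this n)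
  refine eq_zero_of_virasoro_rec (fun n => ?_) (fun n m => ?_) (by simp [f]) (by simp [f, h2])
  · simp only [f, neg_neg, ← halt.neg (b (.inl n))]
    push_cast; ring
  · have h := structConst_mul_apply_add_eq_zero hbr hΩ (.inl n) (.inl m) (.inl (-(n + m)))
    simp only [structConst, bracketIndex, show m + -(n + m) = -n by ring,
      show -(n + m) + n = -m by ring, ← halt.neg (b (.inl n)), ← halt.neg (b (.inl m))] at h
    simp only [f]
    push_cast at h ⊢
    linear_combination h

lemma exists_apply_inl_inr_neg_eq_mul
    (h : kappa lam 2 * Ω (b (.inl 1)) (b (.inr (-1))) =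
      kappa lam 1 * Ω (b (.inl 2)) (b (.inr (-2)))) :
    ∃ c : ℂ, ∀ n : ℤ, Ω (b (.inl n)) (b (.inr (-n))) = c * kappa lam n := by
  have halt := isAlt_of_mem_twoCocycles hΩ
  obtain ⟨c, hc1, hc2⟩ := exists_eq_mul_of_mul_eq_mul (kappa_one_ne_zero_or_kappa_two_ne_zero lam) h
  let f n := Ω (b (.inl n)) (b (.inr (-n))) - c * kappa lam n
  suffices f = 0 from ⟨c, fun n => sub_eq_zero.1 congr($this n)⟩
  refine eq_zero_of_mixed_rec (fun n m hn hm => ?_) (by simp [f, hc1]) (by simp [f, hc2])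
  have h := structConst_mul_apply_add_eq_zero hbr hΩ (.inl n) (.inl m) (.inr (-(n + m)))
  simp (disch := omega) only [structConst, bracketIndex, if_neg, show m + -(n + m) = -n by ring,
    show n + -(n + m) = -m by ring, ← halt.neg (b (.inl n)), ← halt.neg (b (.inl m))] at h
  simp only [f]
  push_cast at h ⊢
  linear_combination h - c * kappa_rec lam n m

lemma apply_inr_inr_neg_eq_mul (n : ℤ) :
    Ω (b (.inr n)) (b (.inr (-n))) = n * Ω (b (.inr 1)) (b (.inr (-1))) := by
  have halt := isAlt_of_mem_twoCocycles hΩ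
  rcases eq_or_ne n 0 with rfl | hn
  · simp [halt.self_eq_zero]
  have h := structConst_mul_apply_add_eq_zero hbr hΩ (.inl (n - 1)) (.inr 1) (.inr (-n))
  simp (disch := omega) only [structConst, bracketIndex, if_neg, show n - 1 + 1 = n by ring,
    show n - 1 + -n = -1 by ring, ← halt.neg (b (.inr 1))] at h
  push_cast at h
  linear_combination h

lemma mem_twoCoboundaries_of_invariants_eq_zero (h : invariants lam b Ω = 0) :
    Ω ∈ twoCoboundaries L := by
  have h₁ := congrFun h 0
  have h₂ := congrFun h 1
  have h₃ := congrFun h 2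
  simp only [invariants, LinearMap.coe_mk, AddHom.coe_mk, Pi.zero_apply, Matrix.cons_val]
    at h₁ h₂ h₃
  have hLL := apply_inl_inl_neg_eq_mul hbr hΩ (by linear_combination h₁)
  obtain ⟨c, hLB⟩ := exists_apply_inl_inr_neg_eq_mul hbr hΩ (by linear_combination h₂)
  have hBB n : Ω (b (.inr n)) (b (.inr (-n))) = 0 := by
    rw [apply_inr_inr_neg_eq_mul hbr hΩ n, h₃, mul_zero]
  refine mem_twoCoboundaries_of_degree_zero hbr deg_bracketIndex (lie_inl_zero hbr) hΩ
    (Sum.elim (fun _ => -Ω (b (.inl 1)) (b (.inl (-1))) / 2) fun _ => -c) ?_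
  rintro (n | n) (m | m) hnm <;> obtain rfl : m = -n := by simp only [deg] at hnm; omega
  · rw [hLL]
    simp only [structConst, bracketIndex, Sum.elim_inl]
    push_cast
    ring
  · rw [hLB]
    simp only [structConst, bracketIndex, add_neg_cancel, if_true, Sum.elim_inr, kappa]
    push_cast
    ring
  · have e := hLB (-n)
    rw [neg_neg] at e
    rw [← (isAlt_of_mem_twoCocycles hΩ).neg, e]
    simp only [structConst, bracketIndex, neg_add_cancel, if_true, Sum.elim_inr, kappa]
    push_cast
    ring
  · simp [hBB, structConst]

end

end WB

/-- the second Lie algebra cohomology of `W_B(λ)` with trivial coefficients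
has dimension `3` for every `λ ∈ ℂ ∪ {∞}`. -/
theorem stmt_9 (lam : Option ℂ) (L : Type) [LieRing L] [LieAlgebra ℂ L]
    (b : Module.Basis (ℤ ⊕ ℤ) ℂ L)
    (hLL : ∀ n m : ℤ,
      ⁅b (Sum.inl n), b (Sum.inl m)⁆ = ((m : ℂ) - (n : ℂ)) • b (Sum.inl (n + m)))
    (hLB : ∀ n m : ℤ,
      ⁅b (Sum.inl n), b (Sum.inr m)⁆ =
        ((m : ℂ) - (if n + m = 0 then lamTerm lam n else 0)) • b (Sum.inr (n + m)))
    (hBB : ∀ n m : ℤ, ⁅b (Sum.inr n), b (Sum.inr m)⁆ = 0) :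
    Module.finrank ℂ
      (↥(twoCocycles L) ⧸ ((twoCoboundaries L).comap (twoCocycles L).subtype)) = 3 := by
  have hbr := WB.lie_basis hLL hLB hBB
  let Φ := WB.invariants lam b ∘ₗ (twoCocycles L).subtype
  have hker : (twoCoboundaries L).comap (twoCocycles L).subtype = LinearMap.ker Φ := by
    ext ⟨Ω, hΩ⟩
    exact ⟨WB.invariants_eq_zero_of_mem_twoCoboundaries hbr,
      WB.mem_twoCoboundaries_of_invariants_eq_zero hbr hΩ⟩
  rw [hker, (Φ.quotKerEquivOfSurjective (WB.invariants_comp_subtype_surjective hbr)).finrank_eq,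
    Module.finrank_fin_fun]
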